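/- Let E : ℝⁿ → ℝ be twice continuously differentiable with gradient g, let U ⊆ ℝⁿ be an open corridor for E, and let θ ∈ U with g(θ) ≠ 0. Set h = E(θ)/‖g(θ)‖² (the corridor learning rate) and assume h ≥ 0 and that the segment {θ - s • g(θ) : s ∈ [0, h]} lies in U. Then a single gradient descent step with this learning rate reaches zero loss: E(θ - h • g(θ)) = 0. -/

import Mathlib

/-!
Let `v = ∇E(θ)`. The set of `s ∈ [0, h]` with `∇E(θ - s • v) = v` contains `0`, is closed,
and is open: if `∇E(θ - t • v) = v`, the local gradient-flow solution through `θ - t • v`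
stays in the corridor, hence is a straight line whose velocity at time `t` is `-v`; so it is
the line `s ↦ θ - s • v` itself, and the gradient along it is `v`. Hence `∇E ≡ v` on the
segment, `E` decreases along it at the constant rate `‖v‖²`, and
`E(θ - h • v) = E(θ) - h ‖v‖² = 0`.
-/

/-- An open set `U ⊆ ℝⁿ` is a *corridor* for `E` if every solution of the gradient flow
`θ'(t) = -∇E(θ(t))` whose image lies in `U` is a straight line traveled at constant speed,
i.e. satisfies `θ(t) = θ(a) + (t - a) • v` for some fixed vector `v`. -/
def IsCorridor {n : ℕ} (E : EuclideanSpace ℝ (Fin n) → ℝ)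
    (U : Set (EuclideanSpace ℝ (Fin n))) : Prop :=
  ∀ (a b : ℝ), a ≤ b → ∀ θ : ℝ → EuclideanSpace ℝ (Fin n),
    (∀ t ∈ Set.Icc a b, HasDerivAt θ (-(gradient E (θ t))) t) →
    (∀ t ∈ Set.Icc a b, θ t ∈ U) →
    ∃ v : EuclideanSpace ℝ (Fin n), ∀ t ∈ Set.Icc a b, θ t = θ a + (t - a) • v

open Set Filter Topology InnerProductSpace

section InnerProductSpace

variable {F : Type*} [NormedAddCommGroup F] [InnerProductSpace ℝ F] [CompleteSpace F]

theorem ContDiff.gradient {f : F → ℝ} {m n : WithTop ℕ∞} (hf : ContDiff ℝ n f)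
    (hmn : m + 1 ≤ n) : ContDiff ℝ m (gradient f) :=
  (toDual ℝ F).symm.contDiff.comp (hf.fderiv_right hmn)

theorem apply_sub_smul_eq_sub_mul_norm_sq_of_gradient_eq {f : F → ℝ} (hf : Differentiable ℝ f)
    {x v : F} {h : ℝ} (hh : 0 ≤ h) (hgrad : ∀ s ∈ Ico 0 h, gradient f (x - s • v) = v) :
    f (x - h • v) = f x - h * ‖v‖ ^ 2 := by
  have hline : ∀ s : ℝ, HasDerivAt (fun u : ℝ => x - u • v) (-v) s := fun s => by
    simpa using ((hasDerivAt_id s).smul_const v).const_sub x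
  have hderiv : ∀ s ∈ Ico 0 h, HasDerivAt (fun u => f (x - u • v)) (-‖v‖ ^ 2) s := by
    intro s hs
    have := (hf _).hasGradientAt.hasFDerivAt.comp_hasDerivAt s (hline s)
    rwa [toDual_apply_apply, hgrad s hs, inner_neg_right, real_inner_self_eq_norm_sq] at this
  have hcont : Continuous fun u : ℝ => f (x - u • v) := hf.continuous.comp (by fun_prop)
  have hquad : ∀ s : ℝ, HasDerivAt (fun u : ℝ => f x - u * ‖v‖ ^ 2) (-‖v‖ ^ 2) s := fun s => by
    simpa using ((hasDerivAt_id s).mul_const (‖v‖ ^ 2)).const_sub (f x)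
  simpa using eq_of_has_deriv_right_eq (fun s hs => (hderiv s hs).hasDerivWithinAt)
    (fun s _ => (hquad s).hasDerivWithinAt) hcont.continuousOn (by fun_prop) (by simp) h
    ⟨hh, le_rfl⟩

end InnerProductSpace

section ODE

variable {X : Type*} [NormedAddCommGroup X] [NormedSpace ℝ X]

theorem ContDiffAt.exists_hasDerivAt_mem_of_mem_nhds [CompleteSpace X] {F : X → X} {p : X}
    {U : Set X} (hF : ContDiffAt ℝ 1 F p) (hU : U ∈ 𝓝 p) (t₀ : ℝ) :
    ∃ f : ℝ → X, f t₀ = p ∧ ∃ ε > 0,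
      ∀ s ∈ Icc (t₀ - ε) (t₀ + ε), HasDerivAt f (F (f s)) s ∧ f s ∈ U := by
  obtain ⟨f, hft₀, ε, hε, hf⟩ :=
    hF.exists_forall_mem_closedBall_exists_eq_forall_mem_Ioo_hasDerivAt₀ t₀
  have hderiv : ∀ᶠ s in 𝓝 t₀, HasDerivAt f (F (f s)) s :=
    eventually_of_mem (Ioo_mem_nhds (by linarith) (by linarith)) hf
  have hmem : ∀ᶠ s in 𝓝 t₀, f s ∈ U :=
    (hderiv.self_of_nhds.continuousAt).preimage_mem_nhds (hft₀ ▸ hU)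
  obtain ⟨δ, hδ, hδf⟩ := Metric.nhds_basis_closedBall.eventually_iff.mp (hderiv.and hmem)
  exact ⟨f, hft₀, δ, hδ, fun s hs => hδf (by rwa [Real.closedBall_eq_Icc])⟩

theorem hasDerivAt_of_forall_mem_Icc_eq_add_smul {f : ℝ → X} {a b s : ℝ} {w : X}
    (hf : ∀ t ∈ Icc a b, f t = f a + (t - a) • w) (hs : s ∈ Ioo a b) : HasDerivAt f w s := by
  have hline : HasDerivAt (fun t : ℝ => f a + (t - a) • w) w s := by
    simpa using (((hasDerivAt_id s).sub_const a).smul_const w).const_add (f a)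
  exact hline.congr_of_eventuallyEq (eventually_of_mem (Icc_mem_nhds hs.1 hs.2) hf)

end ODE

theorem IsCorridor.eventually_gradient_eq {n : ℕ} {E : EuclideanSpace ℝ (Fin n) → ℝ}
    {U : Set (EuclideanSpace ℝ (Fin n))} (hcor : IsCorridor E U) (hU : IsOpen U)
    {x v : EuclideanSpace ℝ (Fin n)} {t : ℝ} (hC1 : ContDiffAt ℝ 1 (gradient E) (x - t • v))
    (hmem : x - t • v ∈ U) (hgrad : gradient E (x - t • v) = v) :
    ∀ᶠ s in 𝓝 t, gradient E (x - s • v) = v := by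
  obtain ⟨f, hft, ε, hε, hf⟩ := hC1.neg.exists_hasDerivAt_mem_of_mem_nhds (hU.mem_nhds hmem) t
  obtain ⟨w, hw⟩ := hcor (t - ε) (t + ε) (by linarith) f (fun s hs => (hf s hs).1)
    (fun s hs => (hf s hs).2)
  have hvel : ∀ s ∈ Ioo (t - ε) (t + ε), -gradient E (f s) = w := fun s hs =>
    (hf s (Ioo_subset_Icc_self hs)).1.unique (hasDerivAt_of_forall_mem_Icc_eq_add_smul hw hs)
  have ht : t ∈ Ioo (t - ε) (t + ε) := ⟨by linarith, by linarith⟩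
  have hwv : w = -v := by rw [← hvel t ht, hft, hgrad]
  filter_upwards [Ioo_mem_nhds ht.1 ht.2] with s hs
  have hfs : f s = x - s • v := by
    have hft' := hw t (Ioo_subset_Icc_self ht)
    rw [hw s (Ioo_subset_Icc_self hs), ← sub_eq_iff_eq_add.mpr hft', hft, hwv]
    module
  rw [← hfs, ← neg_neg (gradient E (f s)), hvel s hs, hwv, neg_neg]

theorem corridor_learning_rate_reaches_zero_loss_general {n : ℕ}
    (E : EuclideanSpace ℝ (Fin n) → ℝ) (hE : ContDiff ℝ 2 E)
    (U : Set (EuclideanSpace ℝ (Fin n))) (hU : IsOpen U) (hcor : IsCorridor E U)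
    (θ : EuclideanSpace ℝ (Fin n)) (hg : gradient E θ ≠ 0)
    (h : ℝ) (hdef : h = E θ / ‖gradient E θ‖ ^ 2) (hpos : 0 ≤ h)
    (hseg : ∀ s ∈ Set.Icc (0 : ℝ) h, θ - s • gradient E θ ∈ U) :
    E (θ - h • gradient E θ) = 0 := by
  set v := gradient E θ
  have hgradC1 : ContDiff ℝ 1 (gradient E) := hE.gradient le_rfl
  have hconst : Icc 0 h ⊆ {s | gradient E (θ - s • v) = v} := by
    refine IsClosed.Icc_subset_of_forall_mem_nhdsWithin ?_ (by simp [v]) fun t ht =>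
      mem_nhdsWithin_of_mem_nhds (hcor.eventually_gradient_eq hU hgradC1.contDiffAt
        (hseg t (Ico_subset_Icc_self ht.2)) ht.1)
    exact (isClosed_eq (by fun_prop) continuous_const).inter isClosed_Icc
  rw [apply_sub_smul_eq_sub_mul_norm_sq_of_gradient_eq (hE.differentiable two_ne_zero) hpos
    fun s hs => hconst (Ico_subset_Icc_self hs), hdef]
  field_simp [hg]
  ring

/-- **Corridor learning rate.** Let `U` be an open corridor for a twice
continuously differentiable loss `E` with gradient `g`, and let `θ ∈ U` with `g(θ) ≠ 0`.
Set `h = E(θ)/‖g(θ)‖²` (the corridor learning rate) and assume `h ≥ 0` and that the segment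
`{θ - s • g(θ) : s ∈ [0, h]}` lies in `U`. Then a single gradient descent step with this
learning rate reaches zero loss: `E(θ - h • g(θ)) = 0`. -/
theorem corridor_learning_rate_reaches_zero_loss {n : ℕ}
    (E : EuclideanSpace ℝ (Fin n) → ℝ) (hE : ContDiff ℝ 2 E)
    (U : Set (EuclideanSpace ℝ (Fin n))) (hU : IsOpen U) (hcor : IsCorridor E U)
    (θ : EuclideanSpace ℝ (Fin n)) (hθ : θ ∈ U) (hg : gradient E θ ≠ 0)
    (h : ℝ) (hdef : h = E θ / ‖gradient E θ‖ ^ 2) (hpos : 0 ≤ h)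
    (hseg : ∀ s ∈ Set.Icc (0 : ℝ) h, θ - s • gradient E θ ∈ U) :
    E (θ - h • gradient E θ) = 0 :=
  corridor_learning_rate_reaches_zero_loss_general E hE U hU hcor θ hg h hdef hpos hseg
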